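/- Let N, d ≥ 1, n_q ≥ 1, α ≥ 0, and 0 ≤ κ < 1. Let σ : ℝ → ℝ satisfy |σ(x) − σ(y)| ≤ |x − y| for all x, y, applied entrywise to matrices. Let Ã ∈ ℝ^{N×N}, W, Ω ∈ ℝ^{d×d}, H ∈ ℝ^{N×d}, b ∈ ℝ^{d} with ‖Ã‖₂ · ‖W‖₂ ≤ κ, and let 𝟏 ∈ ℝ^{N} be the all-ones vector. Let W_in ∈ ℝ^{n_q×d}, W_out ∈ ℝ^{d×n_q}, and let f_M : ℝ^{n_q} → ℝ^{n_q} be a map each of whose scalar components f_M^{(j)} satisfies |f_M^{(j)}(u) − f_M^{(j)}(u')| ≤ 2 ‖u − u'‖₂ for all u, u'. Define q(s) = W_out · f_M(tanh(W_in s)) and let Q : ℝ^{N×d} → ℝ^{N×d} apply q to each row. Define Φ(Z) = σ(Ã Z Wᵀ + H Ωᵀ + 𝟏 bᵀ) + α Q(Z). Then for all Z₁, Z₂ ∈ ℝ^{N×d}, ‖Φ(Z₁) − Φ(Z₂)‖_F ≤ (κ + 2 α √(n_q) ‖W_out‖₂ ‖W_in‖₂) ‖Z₁ − Z₂‖_F;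 in particular, if κ + 2 α √(n_q) ‖W_out‖₂ ‖W_in‖₂ < 1, then Φ has a unique fixed point to which Picard iteration converges from any initialization. -/

import Mathlib

open Matrix Filter Topology

/-- Frobenius norm of a real matrix. -/
noncomputable def frobNorm {m n : ℕ} (A : Matrix (Fin m) (Fin n) ℝ) : ℝ :=
  Real.sqrt (∑ i, ∑ j, (A i j) ^ 2)

/-- Spectral norm (operator norm induced by the Euclidean vector norm). -/
noncomputable def specNorm {m n : ℕ} (A : Matrix (Fin m) (Fin n) ℝ) : ℝ :=
  ‖LinearMap.toContinuousLinearMap (Matrix.toEuclideanLin A)‖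

/-- Euclidean norm of a real vector. -/
noncomputable def eucNorm {n : ℕ} (v : Fin n → ℝ) : ℝ :=
  Real.sqrt (∑ i, (v i) ^ 2)

/-! Both summands of `Φ` are Lipschitz for the Frobenius norm. A matrix acting on the rows (or
columns) of `Z` stretches each of them by at most its spectral norm, so `Z ↦ Ã Z Wᵀ` has gain
`‖Ã‖₂ ‖W‖₂ ≤ κ`, and the entrywise 1-Lipschitz `σ` does not increase it. The injection acts row
by row, and on a row `q` chains `W_in`, the 1-Lipschitz `tanh`, `f_M` (whose `n_q` components are
2-Lipschitz, hence gain `2 √n_q`) and `W_out`. When the sum of the two constants is below 1,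
Banach's fixed point theorem applies on the complete space of matrices. -/

namespace Real

theorem hasDerivAt_tanh (x : ℝ) : HasDerivAt tanh (1 / cosh x ^ 2) x := by
  have h := (hasDerivAt_sinh x).div (hasDerivAt_cosh x) (cosh_pos x).ne'
  rw [show cosh x * cosh x - sinh x * sinh x = 1 by nlinarith [cosh_sq x]] at h
  rwa [show tanh = sinh / cosh from funext tanh_eq_sinh_div_cosh]

theorem lipschitzWith_one_tanh : LipschitzWith 1 tanh := by
  refine lipschitzWith_of_nnnorm_deriv_le (fun x => (hasDerivAt_tanh x).differentiableAt)
    fun x => ?_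
  rw [← NNReal.coe_le_coe, coe_nnnorm, (hasDerivAt_tanh x).deriv, norm_of_nonneg (by positivity),
    NNReal.coe_one, div_le_one (by positivity)]
  nlinarith [one_le_cosh x]

theorem abs_tanh_sub_tanh_le (a b : ℝ) : |tanh a - tanh b| ≤ |a - b| := by
  simpa [dist_eq] using lipschitzWith_one_tanh.dist_le_mul a b

end Real

section EuclideanNorms

variable {m n : ℕ}

theorem eucNorm_nonneg (v : Fin n → ℝ) : 0 ≤ eucNorm v := Real.sqrt_nonneg _

theorem sq_eucNorm (v : Fin n → ℝ) : eucNorm v ^ 2 = ∑ i, v i ^ 2 :=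
  Real.sq_sqrt (by positivity)

theorem eucNorm_le_of_abs_le {u v : Fin n → ℝ} (h : ∀ i, |u i| ≤ |v i|) :
    eucNorm u ≤ eucNorm v :=
  Real.sqrt_le_sqrt <| Finset.sum_le_sum fun i _ => sq_le_sq.2 (h i)

theorem eucNorm_le_sqrt_card_mul {v : Fin n → ℝ} {c : ℝ} (hc : 0 ≤ c) (h : ∀ i, |v i| ≤ c) :
    eucNorm v ≤ √n * c := by
  calc eucNorm v ≤ √(∑ _i : Fin n, c ^ 2) :=
        Real.sqrt_le_sqrt <| Finset.sum_le_sum fun i _ =>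
          sq_le_sq' (abs_le.1 (h i)).1 (abs_le.1 (h i)).2
    _ = √n * c := by simp [Real.sqrt_mul, Real.sqrt_sq hc]

theorem specNorm_nonneg (A : Matrix (Fin m) (Fin n) ℝ) : 0 ≤ specNorm A := norm_nonneg _

theorem eucNorm_mulVec_le (A : Matrix (Fin m) (Fin n) ℝ) (v : Fin n → ℝ) :
    eucNorm (A *ᵥ v) ≤ specNorm A * eucNorm v := by
  simpa [eucNorm, specNorm, EuclideanSpace.norm_eq] using
    (LinearMap.toContinuousLinearMap (toEuclideanLin A)).le_opNorm (WithLp.toLp 2 v)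

end EuclideanNorms

section FrobeniusNorm

variable {m n p : ℕ}

theorem frobNorm_nonneg (A : Matrix (Fin m) (Fin n) ℝ) : 0 ≤ frobNorm A := Real.sqrt_nonneg _

theorem frobNorm_transpose (A : Matrix (Fin m) (Fin n) ℝ) : frobNorm Aᵀ = frobNorm A := by
  rw [frobNorm, frobNorm, Finset.sum_comm]
  rfl

theorem frobNorm_le_of_eucNorm_row_le {X : Matrix (Fin m) (Fin n) ℝ}
    {M : Matrix (Fin m) (Fin p) ℝ} {c : ℝ} (hc : 0 ≤ c)
    (h : ∀ i, eucNorm (M i) ≤ c * eucNorm (X i)) : frobNorm M ≤ c * frobNorm X := by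
  have hrow (i : Fin m) : ∑ j, M i j ^ 2 ≤ c ^ 2 * ∑ j, X i j ^ 2 := by
    rw [← sq_eucNorm, ← sq_eucNorm, ← mul_pow]
    exact pow_le_pow_left₀ (eucNorm_nonneg _) (h i) 2
  calc frobNorm M ≤ √(c ^ 2 * ∑ i, ∑ j, X i j ^ 2) :=
        Real.sqrt_le_sqrt <| (Finset.sum_le_sum fun i _ => hrow i).trans_eq
          (Finset.mul_sum _ _ _).symm
    _ = c * frobNorm X := by rw [Real.sqrt_mul (sq_nonneg c), Real.sqrt_sq hc, frobNorm]

theorem frobNorm_rowwise_sub_le {c : ℝ} (hc : 0 ≤ c)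
    {Q : Matrix (Fin m) (Fin n) ℝ → Matrix (Fin m) (Fin n) ℝ} {q : (Fin n → ℝ) → Fin n → ℝ}
    (hQ : ∀ Z i, Q Z i = q (Z i)) (hq : ∀ s₁ s₂, eucNorm (q s₁ - q s₂) ≤ c * eucNorm (s₁ - s₂))
    (Z₁ Z₂ : Matrix (Fin m) (Fin n) ℝ) : frobNorm (Q Z₁ - Q Z₂) ≤ c * frobNorm (Z₁ - Z₂) :=
  frobNorm_le_of_eucNorm_row_le hc fun i => by
    show eucNorm (Q Z₁ i - Q Z₂ i) ≤ c * eucNorm (Z₁ i - Z₂ i)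
    rw [hQ, hQ]
    exact hq (Z₁ i) (Z₂ i)

theorem frobNorm_map_sub_le {σ : ℝ → ℝ} (hσ : ∀ x y, |σ x - σ y| ≤ |x - y|)
    (M₁ M₂ : Matrix (Fin m) (Fin n) ℝ) :
    frobNorm (M₁.map σ - M₂.map σ) ≤ frobNorm (M₁ - M₂) := by
  simpa only [one_mul] using frobNorm_le_of_eucNorm_row_le zero_le_one fun i => by
    rw [one_mul]
    exact eucNorm_le_of_abs_le fun j => hσ (M₁ i j) (M₂ i j)

theorem frobNorm_mul_transpose_le (Y : Matrix (Fin m) (Fin n) ℝ) (B : Matrix (Fin p) (Fin n) ℝ) :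
    frobNorm (Y * Bᵀ) ≤ specNorm B * frobNorm Y :=
  frobNorm_le_of_eucNorm_row_le (specNorm_nonneg B) fun i => by
    simpa only [Matrix.mul_apply_eq_vecMul, Matrix.vecMul_transpose] using eucNorm_mulVec_le B (Y i)

theorem frobNorm_mul_le (A : Matrix (Fin m) (Fin n) ℝ) (X : Matrix (Fin n) (Fin p) ℝ) :
    frobNorm (A * X) ≤ specNorm A * frobNorm X := by
  simpa only [← frobNorm_transpose (A * X), Matrix.transpose_mul, frobNorm_transpose] using
    frobNorm_mul_transpose_le Xᵀ A

end FrobeniusNorm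

section FrobeniusNormedSpace

attribute [local instance] Matrix.frobeniusNormedAddCommGroup Matrix.frobeniusNormedSpace

variable {m n : ℕ}

theorem frobNorm_eq_norm (A : Matrix (Fin m) (Fin n) ℝ) : frobNorm A = ‖A‖ := by
  simp [frobNorm, frobenius_norm_def, Real.sqrt_eq_rpow]

theorem frobNorm_add_le (A B : Matrix (Fin m) (Fin n) ℝ) :
    frobNorm (A + B) ≤ frobNorm A + frobNorm B := by
  simpa only [frobNorm_eq_norm] using norm_add_le A B

theorem frobNorm_smul {a : ℝ} (ha : 0 ≤ a) (A : Matrix (Fin m) (Fin n) ℝ) :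
    frobNorm (a • A) = a * frobNorm A := by
  rw [frobNorm_eq_norm, frobNorm_eq_norm, norm_smul, Real.norm_of_nonneg ha]

theorem frobNorm_add_smul_sub_le {k l : ℕ}
    {F G : Matrix (Fin m) (Fin n) ℝ → Matrix (Fin k) (Fin l) ℝ} {κ c α : ℝ} (hα : 0 ≤ α)
    (hF : ∀ Z₁ Z₂, frobNorm (F Z₁ - F Z₂) ≤ κ * frobNorm (Z₁ - Z₂))
    (hG : ∀ Z₁ Z₂, frobNorm (G Z₁ - G Z₂) ≤ c * frobNorm (Z₁ - Z₂))
    (Z₁ Z₂ : Matrix (Fin m) (Fin n) ℝ) :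
    frobNorm (F Z₁ + α • G Z₁ - (F Z₂ + α • G Z₂)) ≤ (κ + α * c) * frobNorm (Z₁ - Z₂) :=
  calc frobNorm (F Z₁ + α • G Z₁ - (F Z₂ + α • G Z₂))
      = frobNorm (F Z₁ - F Z₂ + α • (G Z₁ - G Z₂)) := by rw [smul_sub, add_sub_add_comm]
    _ ≤ frobNorm (F Z₁ - F Z₂) + α * frobNorm (G Z₁ - G Z₂) := by
        rw [← frobNorm_smul hα]
        exact frobNorm_add_le _ _
    _ ≤ κ * frobNorm (Z₁ - Z₂) + α * (c * frobNorm (Z₁ - Z₂)) := by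
        gcongr
        exacts [hF Z₁ Z₂, hG Z₁ Z₂]
    _ = (κ + α * c) * frobNorm (Z₁ - Z₂) := by ring

/-- The Frobenius metric induces the product topology, so the limit is in the topology `Matrix`
carries by default. -/
theorem exists_fixedPoint_of_frobNorm_contracting {L : ℝ} (hL : L < 1)
    (Φ : Matrix (Fin m) (Fin n) ℝ → Matrix (Fin m) (Fin n) ℝ)
    (hΦ : ∀ Z₁ Z₂, frobNorm (Φ Z₁ - Φ Z₂) ≤ L * frobNorm (Z₁ - Z₂)) :
    ∃ Zstar, Φ Zstar = Zstar ∧ (∀ Z, Φ Z = Z → Z = Zstar) ∧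
      ∀ Z₀, Tendsto (fun t => Φ^[t] Z₀) atTop (𝓝 Zstar) := by
  have hlip : LipschitzWith L.toNNReal Φ := LipschitzWith.of_dist_le_mul fun Z₁ Z₂ => by
    simp only [dist_eq_norm, ← frobNorm_eq_norm]
    exact (hΦ Z₁ Z₂).trans (mul_le_mul_of_nonneg_right L.le_coe_toNNReal (frobNorm_nonneg _))
  have hΦc : ContractingWith L.toNNReal Φ := ⟨Real.toNNReal_lt_one.2 hL, hlip⟩
  exact ⟨_, hΦc.fixedPoint_isFixedPt, fun Z hZ => hΦc.fixedPoint_unique hZ,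
    hΦc.tendsto_iterate_fixedPoint⟩

end FrobeniusNormedSpace

theorem eucNorm_mulVec_tanh_mulVec_sub_le {nq d p : ℕ} (Win : Matrix (Fin nq) (Fin d) ℝ)
    (Wout : Matrix (Fin p) (Fin nq) ℝ) (f : (Fin nq → ℝ) → (Fin nq → ℝ)) {L : ℝ} (hL : 0 ≤ L)
    (hf : ∀ j u u', |f u j - f u' j| ≤ L * eucNorm (u - u')) (s₁ s₂ : Fin d → ℝ) :
    eucNorm (Wout *ᵥ f (fun j => Real.tanh ((Win *ᵥ s₁) j))
        - Wout *ᵥ f (fun j => Real.tanh ((Win *ᵥ s₂) j)))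
      ≤ L * √nq * specNorm Wout * specNorm Win * eucNorm (s₁ - s₂) := by
  set u₁ : Fin nq → ℝ := fun j => Real.tanh ((Win *ᵥ s₁) j)
  set u₂ : Fin nq → ℝ := fun j => Real.tanh ((Win *ᵥ s₂) j)
  have hf_sub : eucNorm (f u₁ - f u₂) ≤ √nq * (L * eucNorm (u₁ - u₂)) :=
    eucNorm_le_sqrt_card_mul (mul_nonneg hL (eucNorm_nonneg _)) fun j => hf j u₁ u₂
  have htanh_sub : eucNorm (u₁ - u₂) ≤ eucNorm (Win *ᵥ (s₁ - s₂)) :=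
    eucNorm_le_of_abs_le fun j => by
      rw [Matrix.mulVec_sub]
      exact Real.abs_tanh_sub_tanh_le _ _
  calc eucNorm (Wout *ᵥ f u₁ - Wout *ᵥ f u₂)
      = eucNorm (Wout *ᵥ (f u₁ - f u₂)) := by rw [Matrix.mulVec_sub]
    _ ≤ specNorm Wout * (√nq * (L * eucNorm (u₁ - u₂))) :=
        (eucNorm_mulVec_le _ _).trans (by have := specNorm_nonneg Wout; gcongr)
    _ ≤ specNorm Wout * (√nq * (L * (specNorm Win * eucNorm (s₁ - s₂)))) := by
        have := specNorm_nonneg Wout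
        gcongr
        exact htanh_sub.trans (eucNorm_mulVec_le _ _)
    _ = L * √nq * specNorm Wout * specNorm Win * eucNorm (s₁ - s₂) := by ring

theorem frobNorm_map_mul_mul_transpose_add_sub_le {m k l n : ℕ} {σ : ℝ → ℝ}
    (hσ : ∀ x y, |σ x - σ y| ≤ |x - y|) (A : Matrix (Fin m) (Fin k) ℝ)
    (W : Matrix (Fin n) (Fin l) ℝ) (C : Matrix (Fin m) (Fin n) ℝ)
    (Z₁ Z₂ : Matrix (Fin k) (Fin l) ℝ) :
    frobNorm ((A * Z₁ * Wᵀ + C).map σ - (A * Z₂ * Wᵀ + C).map σ)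
      ≤ specNorm A * specNorm W * frobNorm (Z₁ - Z₂) :=
  calc frobNorm ((A * Z₁ * Wᵀ + C).map σ - (A * Z₂ * Wᵀ + C).map σ)
      ≤ frobNorm (A * (Z₁ - Z₂) * Wᵀ) := by
        simpa only [add_sub_add_right_eq_sub, Matrix.mul_sub, Matrix.sub_mul] using
          frobNorm_map_sub_le hσ (A * Z₁ * Wᵀ + C) (A * Z₂ * Wᵀ + C)
    _ ≤ specNorm W * (specNorm A * frobNorm (Z₁ - Z₂)) :=
        (frobNorm_mul_transpose_le _ _).trans
          (mul_le_mul_of_nonneg_left (frobNorm_mul_le _ _) (specNorm_nonneg _))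
    _ = specNorm A * specNorm W * frobNorm (Z₁ - Z₂) := by ring

theorem explicit_state_dependent_injection_general
    (N d nq : ℕ)
    (α κ : ℝ) (hα : 0 ≤ α)
    (σ : ℝ → ℝ) (hσ : ∀ x y : ℝ, |σ x - σ y| ≤ |x - y|)
    (Atil : Matrix (Fin N) (Fin N) ℝ) (W Ω : Matrix (Fin d) (Fin d) ℝ)
    (H : Matrix (Fin N) (Fin d) ℝ) (b : Fin d → ℝ)
    (hAW : specNorm Atil * specNorm W ≤ κ)
    (Win : Matrix (Fin nq) (Fin d) ℝ) (Wout : Matrix (Fin d) (Fin nq) ℝ)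
    (fM : (Fin nq → ℝ) → (Fin nq → ℝ))
    (hfM : ∀ (j : Fin nq) (u u' : Fin nq → ℝ),
      |fM u j - fM u' j| ≤ 2 * eucNorm (u - u'))
    (q : (Fin d → ℝ) → (Fin d → ℝ))
    (hqdef : ∀ s, q s = Wout.mulVec (fM (fun j => Real.tanh (Win.mulVec s j))))
    (Q : Matrix (Fin N) (Fin d) ℝ → Matrix (Fin N) (Fin d) ℝ)
    (hQ : ∀ (Z : Matrix (Fin N) (Fin d) ℝ) (i : Fin N), Q Z i = q (Z i))
    (Φ : Matrix (Fin N) (Fin d) ℝ → Matrix (Fin N) (Fin d) ℝ)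
    (hΦ : ∀ Z, Φ Z =
      (Atil * Z * Wᵀ + H * Ωᵀ + Matrix.vecMulVec (fun _ => (1 : ℝ)) b).map σ
        + α • Q Z) :
    (∀ Z₁ Z₂ : Matrix (Fin N) (Fin d) ℝ,
        frobNorm (Φ Z₁ - Φ Z₂) ≤
          (κ + 2 * α * Real.sqrt nq * specNorm Wout * specNorm Win)
            * frobNorm (Z₁ - Z₂)) ∧
    (κ + 2 * α * Real.sqrt nq * specNorm Wout * specNorm Win < 1 →
      ∃ Zstar : Matrix (Fin N) (Fin d) ℝ,
        Φ Zstar = Zstar ∧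
        (∀ Z, Φ Z = Z → Z = Zstar) ∧
        (∀ Z₀ : Matrix (Fin N) (Fin d) ℝ,
          Tendsto (fun t => Φ^[t] Z₀) atTop (nhds Zstar))) := by
  set cQ := 2 * √nq * specNorm Wout * specNorm Win
  have hq (s₁ s₂ : Fin d → ℝ) : eucNorm (q s₁ - q s₂) ≤ cQ * eucNorm (s₁ - s₂) := by
    rw [hqdef, hqdef]
    exact eucNorm_mulVec_tanh_mulVec_sub_le Win Wout fM zero_le_two hfM s₁ s₂
  have hbackbone (Z₁ Z₂ : Matrix (Fin N) (Fin d) ℝ) :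
      frobNorm ((Atil * Z₁ * Wᵀ + H * Ωᵀ + Matrix.vecMulVec (fun _ => (1 : ℝ)) b).map σ
        - (Atil * Z₂ * Wᵀ + H * Ωᵀ + Matrix.vecMulVec (fun _ => (1 : ℝ)) b).map σ)
        ≤ κ * frobNorm (Z₁ - Z₂) := by
    simp only [add_assoc]
    exact (frobNorm_map_mul_mul_transpose_add_sub_le hσ Atil W _ Z₁ Z₂).trans
      (mul_le_mul_of_nonneg_right hAW (frobNorm_nonneg _))
  have hcQ : 0 ≤ cQ := by
    have := specNorm_nonneg Wout
    have := specNorm_nonneg Win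
    positivity
  have hΦ_lip (Z₁ Z₂ : Matrix (Fin N) (Fin d) ℝ) :
      frobNorm (Φ Z₁ - Φ Z₂) ≤ (κ + α * cQ) * frobNorm (Z₁ - Z₂) := by
    rw [hΦ, hΦ]
    exact frobNorm_add_smul_sub_le hα hbackbone (frobNorm_rowwise_sub_le hcQ hQ hq) Z₁ Z₂
  have hL : κ + 2 * α * √nq * specNorm Wout * specNorm Win = κ + α * cQ := by ring
  rw [hL]
  exact ⟨hΦ_lip, fun hL1 => exists_fixedPoint_of_frobNorm_contracting hL1 Φ hΦ_lip⟩

theorem explicit_state_dependent_injection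
    (N d nq : ℕ) (hN : 1 ≤ N) (hd : 1 ≤ d) (hnq : 1 ≤ nq)
    (α κ : ℝ) (hα : 0 ≤ α) (hκ0 : 0 ≤ κ) (hκ1 : κ < 1)
    (σ : ℝ → ℝ) (hσ : ∀ x y : ℝ, |σ x - σ y| ≤ |x - y|)
    (Atil : Matrix (Fin N) (Fin N) ℝ) (W Ω : Matrix (Fin d) (Fin d) ℝ)
    (H : Matrix (Fin N) (Fin d) ℝ) (b : Fin d → ℝ)
    (hAW : specNorm Atil * specNorm W ≤ κ)
    (Win : Matrix (Fin nq) (Fin d) ℝ) (Wout : Matrix (Fin d) (Fin nq) ℝ)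
    (fM : (Fin nq → ℝ) → (Fin nq → ℝ))
    (hfM : ∀ (j : Fin nq) (u u' : Fin nq → ℝ),
      |fM u j - fM u' j| ≤ 2 * eucNorm (u - u'))
    (q : (Fin d → ℝ) → (Fin d → ℝ))
    (hqdef : ∀ s, q s = Wout.mulVec (fM (fun j => Real.tanh (Win.mulVec s j))))
    (Q : Matrix (Fin N) (Fin d) ℝ → Matrix (Fin N) (Fin d) ℝ)
    (hQ : ∀ (Z : Matrix (Fin N) (Fin d) ℝ) (i : Fin N), Q Z i = q (Z i))
    (Φ : Matrix (Fin N) (Fin d) ℝ → Matrix (Fin N) (Fin d) ℝ)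
    (hΦ : ∀ Z, Φ Z =
      (Atil * Z * Wᵀ + H * Ωᵀ + Matrix.vecMulVec (fun _ => (1 : ℝ)) b).map σ
        + α • Q Z) :
    (∀ Z₁ Z₂ : Matrix (Fin N) (Fin d) ℝ,
        frobNorm (Φ Z₁ - Φ Z₂) ≤
          (κ + 2 * α * Real.sqrt nq * specNorm Wout * specNorm Win)
            * frobNorm (Z₁ - Z₂)) ∧
    (κ + 2 * α * Real.sqrt nq * specNorm Wout * specNorm Win < 1 →
      ∃ Zstar : Matrix (Fin N) (Fin d) ℝ,
        Φ Zstar = Zstar ∧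
        (∀ Z, Φ Z = Z → Z = Zstar) ∧
        (∀ Z₀ : Matrix (Fin N) (Fin d) ℝ,
          Tendsto (fun t => Φ^[t] Z₀) atTop (nhds Zstar))) :=
  explicit_state_dependent_injection_general N d nq α κ hα σ hσ Atil W Ω H b hAW Win Wout fM hfM q
    hqdef Q hQ Φ hΦ
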